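/- For the network without hidden layer with W = { w ∈ ℝ^d : ‖w‖₂ ≤ B₁ } and inputs satisfying ‖x‖₂ ≤ B₂, the dropout Rademacher complexity of dropout of units satisfies 𝔑_n(F_W^{(I)}) ≤ B₁B₂√(ρ/n), where F_W^{(I)} = { (x,r) ↦ ⟨w, x⊙r⟩ : w ∈ W } and r ∈ {0,1}^d has entries i.i.d. Bern(ρ). -/

import Mathlib

open MeasureTheory Finset

noncomputable section

/-- `0/1` dropout mask as a real number. -/
def mask (b : Bool) : ℝ := if b then 1 else 0

/-- Rademacher sign `±1`. -/
def sgn (b : Bool) : ℝ := if b then 1 else -1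

/-- Probability of a single `Bern(ρ)` coordinate. -/
def bw (ρ : ℝ) (b : Bool) : ℝ := if b then ρ else 1 - ρ

/-- Empirical dropout Rademacher complexity of a class of functions on
`X × R` indexed by weights `w ∈ WS`, on sample `xs` and dropout variables `rs`.
The expectation over the i.i.d. uniform signs is the average over all `2ⁿ`
sign patterns. -/
def empRadW {Wt X R : Type*} (n : ℕ) (WS : Set Wt)
    (F : Wt → X → R → ℝ) (xs : Fin n → X) (rs : Fin n → R) : ℝ :=
  (∑ ε : Fin n → Bool,
      sSup {v : ℝ | ∃ w ∈ WS,
        v = (1 / (n : ℝ)) * ∑ i, sgn (ε i) * F w (xs i) (rs i)}) / 2 ^ n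

/-- The (expected) dropout Rademacher complexity `𝔑ₙ`: the expectation, over the
i.i.d. sample `xs ~ DXⁿ` and the i.i.d. dropout variables `rs` (each distributed
according to the finite Bernoulli-product law with weights `wt`), of the empirical
dropout Rademacher complexity. -/
def radC {Wt R : Type*} [Fintype R] (n d : ℕ) (DX : Measure (Fin d → ℝ))
    (WS : Set Wt) (wt : R → ℝ) (F : Wt → (Fin d → ℝ) → R → ℝ) : ℝ :=
  ∫ xs : Fin n → Fin d → ℝ,
      ∑ rs : Fin n → R, (∏ i, wt (rs i)) * empRadW n WS F xs rs
    ∂(Measure.pi fun _ => DX)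

/-- Weight class of the no-hidden-layer network: the `ℓ₂` ball of radius `B₁`. -/
def linW (d : ℕ) (B₁ : ℝ) : Set (Fin d → ℝ) :=
  {w | Real.sqrt (∑ j, w j ^ 2) ≤ B₁}

/-- Type (I) dropout (dropout of units) output of the no-hidden-layer network:
`(x, r) ↦ ⟨w, x⊙r⟩`. -/
def linFI (d : ℕ) : (Fin d → ℝ) → (Fin d → ℝ) → (Fin d → Bool) → ℝ :=
  fun w x r => ∑ j, w j * (x j * mask (r j))

/-- Type (II) dropout (dropout of weights) output of the no-hidden-layer network:
`(x, r) ↦ ⟨w⊙r, x⟩`. -/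
def linFII (d : ℕ) : (Fin d → ℝ) → (Fin d → ℝ) → (Fin d → Bool) → ℝ :=
  fun w x r => ∑ j, (w j * mask (r j)) * x j

/-- Type (III) dropout (dropout of both weights and units) output of the
no-hidden-layer network: `(x, (r₁, r₂)) ↦ ⟨w⊙r₁, x⊙r₂⟩`. -/
def linFIII (d : ℕ) :
    (Fin d → ℝ) → (Fin d → ℝ) → (Fin d → Bool) × (Fin d → Bool) → ℝ :=
  fun w x r => ∑ j, (w j * mask (r.1 j)) * (x j * mask (r.2 j))

/-- Bernoulli product weight of a dropout vector `r ∈ {0,1}^d`. -/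
def wtVec (d : ℕ) (ρ : ℝ) (r : Fin d → Bool) : ℝ := ∏ j, bw ρ (r j)

/-- Bernoulli product weight of a pair of dropout vectors. -/
def wtPair (d : ℕ) (ρ : ℝ) (r : (Fin d → Bool) × (Fin d → Bool)) : ℝ :=
  (∏ j, bw ρ (r.1 j)) * ∏ j, bw ρ (r.2 j)

end

/-!
For fixed signs `ε`, Cauchy–Schwarz bounds the supremum over the ball by `B₁ ‖∑ᵢ εᵢ zᵢ‖ / n`,
where `zᵢ = xᵢ ⊙ rᵢ`. Jensen's inequality for `√` together with the orthogonality of Rademacher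
signs turns the average over `ε` into `√(∑ᵢ ‖zᵢ‖²)`, and a second use of Jensen's inequality,
now over the dropout masks, gives `√(ρ ∑ᵢ ‖xᵢ‖²) ≤ √(n ρ) B₂`, since `E[rᵢⱼ²] = ρ`.
-/

open Real

section General

theorem sum_mul_sqrt_le_sqrt_sum_mul {ι : Type*} {s : Finset ι} {p a : ι → ℝ}
    (hp : ∀ i ∈ s, 0 ≤ p i) (hp₁ : ∑ i ∈ s, p i = 1) (ha : ∀ i ∈ s, 0 ≤ a i) :
    ∑ i ∈ s, p i * √(a i) ≤ √(∑ i ∈ s, p i * a i) :=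
  strictConcaveOn_sqrt.concaveOn.le_map_sum hp hp₁ ha

theorem div_mul_sqrt_mul_mul_sq (a c : ℝ) {b m : ℝ} (hb : 0 ≤ b) (hm : 0 ≤ m) :
    a / m * √(c * (m * b ^ 2)) = a * b * √(c / m) := by
  have hcm : c / m = c * m / m ^ 2 := by
    rcases hm.eq_or_lt with rfl | hm'
    · simp
    · field_simp
  rw [hcm, sqrt_div' _ (sq_nonneg m), sqrt_sq hm, ← mul_assoc, sqrt_mul' _ (sq_nonneg b),
    sqrt_sq hb]
  ring

variable {ι κ : Type*} [Fintype ι] [DecidableEq ι] [Fintype κ]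

theorem sum_pi_prod_eq_one {f : κ → ℝ} (hf : ∑ k, f k = 1) :
    ∑ g : ι → κ, ∏ i, f (g i) = 1 := by
  rw [← Fintype.prod_sum (fun _ k => f k), hf, prod_const_one]

theorem sum_pi_prod_mul_apply {f : κ → ℝ} (hf : ∑ k, f k = 1) (h : κ → ℝ) (i₀ : ι) :
    ∑ g : ι → κ, (∏ i, f (g i)) * h (g i₀) = ∑ k, f k * h k := by
  have factor (g : ι → κ) :
      (∏ i, f (g i)) * h (g i₀) = ∏ i, f (g i) * (if i = i₀ then h (g i) else 1) := by
    rw [prod_mul_distrib, prod_ite_eq' univ i₀, if_pos (mem_univ _)]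
  simp_rw [factor, ← Fintype.prod_sum (fun i k => f k * (if i = i₀ then h k else 1))]
  rw [prod_eq_single i₀ (fun i _ hi => by simp [hi, hf]) (by simp)]
  simp

theorem sgn_mul_self (b : Bool) : sgn b * sgn b = 1 := by
  cases b <;> norm_num [sgn]

theorem sum_sgn_mul_sgn (i k : ι) :
    ∑ ε : ι → Bool, sgn (ε i) * sgn (ε k) = if i = k then 2 ^ Fintype.card ι else 0 := by
  split_ifs with hik
  · subst hik
    simp [sgn_mul_self]
  · -- flipping the `i`-th sign is a bijection that negates the summand
    have flip_invol : Function.Involutive fun ε : ι → Bool => Function.update ε i !(ε i) := by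
      intro ε
      ext j
      by_cases hj : j = i <;> simp [hj]
    have hneg := Equiv.sum_comp flip_invol.toPerm fun ε => sgn (ε i) * sgn (ε k)
    simp only [Function.Involutive.coe_toPerm, Function.update_self,
      Function.update_of_ne (Ne.symm hik)] at hneg
    have sgn_not (b : Bool) : sgn (!b) = -sgn b := by cases b <;> simp [sgn]
    simp only [sgn_not, neg_mul, sum_neg_distrib] at hneg
    linarith

theorem sum_sq_sum_sgn_mul (c : ι → ℝ) :
    ∑ ε : ι → Bool, (∑ i, sgn (ε i) * c i) ^ 2 = 2 ^ Fintype.card ι * ∑ i, c i ^ 2 := by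
  calc ∑ ε : ι → Bool, (∑ i, sgn (ε i) * c i) ^ 2
      = ∑ i, ∑ k, c i * c k * ∑ ε : ι → Bool, sgn (ε i) * sgn (ε k) := by
        simp_rw [sq, sum_mul_sum, mul_sum]
        rw [sum_comm]
        refine sum_congr rfl fun i _ => ?_
        rw [sum_comm]
        exact sum_congr rfl fun k _ => sum_congr rfl fun ε _ => by ring
    _ = 2 ^ Fintype.card ι * ∑ i, c i ^ 2 := by
        simp_rw [sum_sgn_mul_sgn, mul_ite, mul_zero, sum_ite_eq, mem_univ, if_true, mul_sum]
        exact sum_congr rfl fun i _ => by ring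

theorem sum_sqrt_sum_sq_sum_sgn_mul_le (z : ι → κ → ℝ) :
    (∑ ε : ι → Bool, √(∑ j, (∑ i, sgn (ε i) * z i j) ^ 2)) / 2 ^ Fintype.card ι
      ≤ √(∑ i, ∑ j, z i j ^ 2) := by
  have hpos : (0 : ℝ) < 2 ^ Fintype.card ι := by positivity
  have hp₁ : ∑ _ε : ι → Bool, (2 ^ Fintype.card ι : ℝ)⁻¹ = 1 := by simp
  calc (∑ ε : ι → Bool, √(∑ j, (∑ i, sgn (ε i) * z i j) ^ 2)) / 2 ^ Fintype.card ι
      = ∑ ε : ι → Bool, (2 ^ Fintype.card ι : ℝ)⁻¹ * √(∑ j, (∑ i, sgn (ε i) * z i j) ^ 2) := by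
        rw [div_eq_inv_mul, mul_sum]
    _ ≤ √(∑ ε : ι → Bool, (2 ^ Fintype.card ι : ℝ)⁻¹ * ∑ j, (∑ i, sgn (ε i) * z i j) ^ 2) :=
        sum_mul_sqrt_le_sqrt_sum_mul (fun _ _ => by positivity) hp₁ (fun _ _ => by positivity)
    _ = √(∑ i, ∑ j, z i j ^ 2) := by
        rw [← mul_sum, sum_comm]
        simp_rw [sum_sq_sum_sgn_mul]
        rw [← mul_sum, inv_mul_cancel_left₀ hpos.ne', sum_comm]

end General

section Bernoulli

variable {d : ℕ} {ρ : ℝ}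

theorem bw_nonneg (hρ₀ : 0 ≤ ρ) (hρ₁ : ρ ≤ 1) (b : Bool) : 0 ≤ bw ρ b := by
  cases b <;> simp [bw] <;> linarith

theorem sum_bw : ∑ b : Bool, bw ρ b = 1 := by
  simp [bw]

theorem wtVec_nonneg (hρ₀ : 0 ≤ ρ) (hρ₁ : ρ ≤ 1) (r : Fin d → Bool) : 0 ≤ wtVec d ρ r :=
  prod_nonneg fun j _ => bw_nonneg hρ₀ hρ₁ (r j)

theorem sum_wtVec : ∑ r : Fin d → Bool, wtVec d ρ r = 1 :=
  sum_pi_prod_eq_one (ι := Fin d) sum_bw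

theorem sum_wtVec_mul_mask_sq (j : Fin d) :
    ∑ r : Fin d → Bool, wtVec d ρ r * mask (r j) ^ 2 = ρ := by
  simp only [wtVec]
  rw [sum_pi_prod_mul_apply sum_bw (fun b => mask b ^ 2)]
  simp [bw, mask]

theorem sum_prod_wtVec_mul_sum_sq_mask {n : ℕ} (xs : Fin n → Fin d → ℝ) :
    ∑ rs : Fin n → Fin d → Bool,
        (∏ i, wtVec d ρ (rs i)) * ∑ i, ∑ j, (xs i j * mask (rs i j)) ^ 2
      = ρ * ∑ i, ∑ j, xs i j ^ 2 := by
  have marginal (i : Fin n) (j : Fin d) :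
      ∑ rs : Fin n → Fin d → Bool, (∏ i', wtVec d ρ (rs i')) * mask (rs i j) ^ 2 = ρ := by
    rw [sum_pi_prod_mul_apply sum_wtVec (fun r => mask (r j) ^ 2), sum_wtVec_mul_mask_sq]
  calc ∑ rs : Fin n → Fin d → Bool,
        (∏ i, wtVec d ρ (rs i)) * ∑ i, ∑ j, (xs i j * mask (rs i j)) ^ 2
      = ∑ i, ∑ j, xs i j ^ 2 *
          ∑ rs : Fin n → Fin d → Bool, (∏ i', wtVec d ρ (rs i')) * mask (rs i j) ^ 2 := by
        simp_rw [mul_sum]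
        rw [sum_comm]
        refine sum_congr rfl fun i _ => ?_
        rw [sum_comm]
        exact sum_congr rfl fun j _ => sum_congr rfl fun rs _ => by ring
    _ = ρ * ∑ i, ∑ j, xs i j ^ 2 := by
        simp_rw [marginal, mul_sum]
        exact sum_congr rfl fun i _ => sum_congr rfl fun j _ => by ring

end Bernoulli

section LinearUnits

variable {d n : ℕ} {B₁ : ℝ}

theorem sum_mul_le_of_mem_linW {w : Fin d → ℝ} (hw : w ∈ linW d B₁) (v : Fin d → ℝ) :
    ∑ j, w j * v j ≤ B₁ * √(∑ j, v j ^ 2) :=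
  (sum_mul_le_sqrt_mul_sqrt univ w v).trans
    (mul_le_mul_of_nonneg_right hw (sqrt_nonneg _))

theorem sum_sgn_mul_linFI (ε : Fin n → Bool) (w : Fin d → ℝ) (xs : Fin n → Fin d → ℝ)
    (rs : Fin n → Fin d → Bool) :
    ∑ i, sgn (ε i) * linFI d w (xs i) (rs i)
      = ∑ j, w j * ∑ i, sgn (ε i) * (xs i j * mask (rs i j)) := by
  simp only [linFI, mul_sum]
  rw [sum_comm]
  exact sum_congr rfl fun j _ => sum_congr rfl fun i _ => by ring

theorem empRadW_linFI_le (hB₁ : 0 ≤ B₁) (xs : Fin n → Fin d → ℝ) (rs : Fin n → Fin d → Bool) :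
    empRadW n (linW d B₁) (linFI d) xs rs
      ≤ B₁ / n * √(∑ i, ∑ j, (xs i j * mask (rs i j)) ^ 2) := by
  have sup_le (ε : Fin n → Bool) :
      sSup {v : ℝ | ∃ w ∈ linW d B₁,
          v = (1 / (n : ℝ)) * ∑ i, sgn (ε i) * linFI d w (xs i) (rs i)}
        ≤ B₁ / n * √(∑ j, (∑ i, sgn (ε i) * (xs i j * mask (rs i j))) ^ 2) := by
    refine Real.sSup_le ?_ (by positivity)
    rintro _ ⟨w, hw, rfl⟩
    rw [sum_sgn_mul_linFI, one_div_mul_eq_div, div_mul_eq_mul_div]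
    gcongr
    exact sum_mul_le_of_mem_linW hw _
  have khintchine := sum_sqrt_sum_sq_sum_sgn_mul_le fun i j => xs i j * mask (rs i j)
  rw [Fintype.card_fin] at khintchine
  calc empRadW n (linW d B₁) (linFI d) xs rs
      ≤ (∑ ε : Fin n → Bool,
          B₁ / n * √(∑ j, (∑ i, sgn (ε i) * (xs i j * mask (rs i j))) ^ 2)) / 2 ^ n := by
        unfold empRadW
        gcongr with ε
        exact sup_le ε
    _ = B₁ / n * ((∑ ε : Fin n → Bool,
          √(∑ j, (∑ i, sgn (ε i) * (xs i j * mask (rs i j))) ^ 2)) / 2 ^ n) := by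
        rw [← mul_sum, mul_div_assoc]
    _ ≤ B₁ / n * √(∑ i, ∑ j, (xs i j * mask (rs i j)) ^ 2) := by
        gcongr

theorem sum_prod_wtVec_mul_empRadW_linFI_le {ρ B₂ : ℝ} (hρ₀ : 0 ≤ ρ) (hρ₁ : ρ ≤ 1)
    (hB₁ : 0 ≤ B₁) (hB₂ : 0 ≤ B₂) (xs : Fin n → Fin d → ℝ)
    (hxs : ∀ i, √(∑ j, xs i j ^ 2) ≤ B₂) :
    ∑ rs : Fin n → Fin d → Bool,
        (∏ i, wtVec d ρ (rs i)) * empRadW n (linW d B₁) (linFI d) xs rs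
      ≤ B₁ * B₂ * √(ρ / n) := by
  have hW₀ (rs : Fin n → Fin d → Bool) : 0 ≤ ∏ i, wtVec d ρ (rs i) :=
    prod_nonneg fun i _ => wtVec_nonneg hρ₀ hρ₁ (rs i)
  have hnorm (i : Fin n) : ∑ j, xs i j ^ 2 ≤ B₂ ^ 2 := by
    rw [← sq_sqrt (by positivity : 0 ≤ ∑ j, xs i j ^ 2)]
    exact pow_le_pow_left₀ (sqrt_nonneg _) (hxs i) 2
  calc ∑ rs : Fin n → Fin d → Bool,
        (∏ i, wtVec d ρ (rs i)) * empRadW n (linW d B₁) (linFI d) xs rs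
      ≤ ∑ rs : Fin n → Fin d → Bool, (∏ i, wtVec d ρ (rs i)) *
          (B₁ / n * √(∑ i, ∑ j, (xs i j * mask (rs i j)) ^ 2)) := by
        gcongr with rs
        · exact hW₀ rs
        · exact empRadW_linFI_le hB₁ xs rs
    _ = B₁ / n * ∑ rs : Fin n → Fin d → Bool, (∏ i, wtVec d ρ (rs i)) *
          √(∑ i, ∑ j, (xs i j * mask (rs i j)) ^ 2) := by
        rw [mul_sum]
        exact sum_congr rfl fun rs _ => by ring
    _ ≤ B₁ / n * √(ρ * ∑ i, ∑ j, xs i j ^ 2) := by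
        rw [← sum_prod_wtVec_mul_sum_sq_mask]
        gcongr
        exact sum_mul_sqrt_le_sqrt_sum_mul (fun rs _ => hW₀ rs)
          (sum_pi_prod_eq_one (ι := Fin n) sum_wtVec) (fun _ _ => by positivity)
    _ ≤ B₁ / n * √(ρ * (n * B₂ ^ 2)) := by
        gcongr
        simpa using sum_le_sum fun i (_ : i ∈ univ) => hnorm i
    _ = B₁ * B₂ * √(ρ / n) := div_mul_sqrt_mul_mul_sq B₁ ρ hB₂ n.cast_nonneg

end LinearUnits

theorem MeasureTheory.integral_le_of_ae_le_of_nonneg {α : Type*} [MeasurableSpace α]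
    {μ : Measure α} [IsProbabilityMeasure μ] {f : α → ℝ} {c : ℝ} (hc : 0 ≤ c)
    (hf : ∀ᵐ x ∂μ, f x ≤ c) : ∫ x, f x ∂μ ≤ c := by
  by_cases hfi : Integrable f μ
  · simpa using integral_mono_ae hfi (integrable_const c) hf
  · rwa [integral_undef hfi]

theorem linear_dropout_rad_units_bound_general (d n : ℕ)
    (ρ B₁ B₂ : ℝ) (hρ0 : 0 ≤ ρ) (hρ1 : ρ ≤ 1) (hB₁ : 0 ≤ B₁) (hB₂ : 0 ≤ B₂)
    (DX : Measure (Fin d → ℝ)) [IsProbabilityMeasure DX]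
    (hsupp : ∀ᵐ x ∂DX, Real.sqrt (∑ j, x j ^ 2) ≤ B₂) :
    radC n d DX (linW d B₁) (wtVec d ρ) (linFI d) ≤ B₁ * B₂ * Real.sqrt (ρ / n) := by
  have hsample : ∀ᵐ xs : Fin n → Fin d → ℝ ∂Measure.pi fun _ => DX,
      ∀ i, √(∑ j, xs i j ^ 2) ≤ B₂ :=
    ae_all_iff.2 fun i =>
      (Measure.tendsto_eval_ae_ae (μ := fun _ => DX) (i := i)).eventually hsupp
  exact integral_le_of_ae_le_of_nonneg (by positivity) <|
    hsample.mono fun xs hxs => sum_prod_wtVec_mul_empRadW_linFI_le hρ0 hρ1 hB₁ hB₂ xs hxs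

/-- For the network without hidden layer, with
`W = {w : ‖w‖₂ ≤ B₁}` and inputs a.s. satisfying `‖x‖₂ ≤ B₂`, the dropout
Rademacher complexity of dropout of units satisfies
`𝔑ₙ(F_W^{(I)}) ≤ B₁ B₂ √(ρ/n)`. -/
theorem linear_dropout_rad_units_bound (d n : ℕ) (hn : 0 < n)
    (ρ B₁ B₂ : ℝ) (hρ0 : 0 ≤ ρ) (hρ1 : ρ ≤ 1) (hB₁ : 0 ≤ B₁) (hB₂ : 0 ≤ B₂)
    (DX : Measure (Fin d → ℝ)) [IsProbabilityMeasure DX]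
    (hsupp : ∀ᵐ x ∂DX, Real.sqrt (∑ j, x j ^ 2) ≤ B₂) :
    radC n d DX (linW d B₁) (wtVec d ρ) (linFI d) ≤ B₁ * B₂ * Real.sqrt (ρ / n) :=
  linear_dropout_rad_units_bound_general d n ρ B₁ B₂ hρ0 hρ1 hB₁ hB₂ DX hsupp
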